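/- In a median graph the median operation is 1-Lipschitz in each variable: for all vertices x, y, a, b one has dist(m(x, y, a), m(x, y, b)) ≤ dist(a, b). -/

import Mathlib

/-- `m` is a median function for the graph `G`: `G` is connected and for all
`x y z` the vertex `m x y z` is the unique vertex lying (metrically) between
each pair among `x, y, z`. -/
def IsMedianFn {V : Type*} (G : SimpleGraph V) (m : V → V → V → V) : Prop :=
  G.Connected ∧ ∀ x y z : V,
    (G.dist x (m x y z) + G.dist (m x y z) y = G.dist x y ∧
     G.dist y (m x y z) + G.dist (m x y z) z = G.dist y z ∧
     G.dist x (m x y z) + G.dist (m x y z) z = G.dist x z) ∧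
    ∀ w : V,
      (G.dist x w + G.dist w y = G.dist x y ∧
       G.dist y w + G.dist w z = G.dist y z ∧
       G.dist x w + G.dist w z = G.dist x z) → w = m x y z

/-- `Y` is a median subalgebra: it is closed under the median operation. -/
def IsSubalgebra {V : Type*} (m : V → V → V → V) (Y : Set V) : Prop :=
  ∀ x ∈ Y, ∀ y ∈ Y, ∀ z ∈ Y, m x y z ∈ Y

/-- `A` is `C`-connected: any two points of `A` are joined by a finite sequence
of points of `A` with consecutive points at graph distance at most `C`. -/
def CConnected {V : Type*} (G : SimpleGraph V) (C : ℕ) (A : Set V) : Prop :=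
  ∀ x ∈ A, ∀ y ∈ A, ∃ (n : ℕ) (p : ℕ → V), p 0 = x ∧ p n = y ∧
    (∀ i ≤ n, p i ∈ A) ∧ ∀ i < n, G.dist (p i) (p (i + 1)) ≤ C

/-- The `r`-neighbourhood of `A` in the graph metric. -/
def Nbhd {V : Type*} (G : SimpleGraph V) (A : Set V) (r : ℕ) : Set V :=
  {v | ∃ a ∈ A, G.dist v a ≤ r}

/-- `G` has cube dimension at most `R`: any isometrically embedded
`n`-dimensional Hamming cube has `n ≤ R`. -/
def CubeDimLE {V : Type*} (G : SimpleGraph V) (R : ℕ) : Prop :=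
  ∀ (n : ℕ) (f : (Fin n → Bool) → V),
    (∀ a b, G.dist (f a) (f b) = hammingDist a b) → n ≤ R

/-- The median subalgebra generated by `A`. -/
def MedianSpan {V : Type*} (m : V → V → V → V) (A : Set V) : Set V :=
  ⋂₀ {Y : Set V | A ⊆ Y ∧ IsSubalgebra m Y}

/-- `Z` is (metrically) convex in `G`: every vertex on a geodesic between two
points of `Z` belongs to `Z`. -/
def GraphConvex {V : Type*} (G : SimpleGraph V) (Z : Set V) : Prop :=
  ∀ x ∈ Z, ∀ y ∈ Z, ∀ w : V, G.dist x w + G.dist w y = G.dist x y → w ∈ Z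

/-- The convex hull of `A`: the intersection of all convex sets containing `A`. -/
def ConvexHullG {V : Type*} (G : SimpleGraph V) (A : Set V) : Set V :=
  ⋂₀ {Z : Set V | GraphConvex G Z ∧ A ⊆ Z}


/-! Adjacent vertices of a median graph have distances to any third vertex differing by exactly
one, and a median graph contains no `K₂,₃` (two vertices with three common neighbours would both be
medians of those neighbours). From these, a "square" argument shows that intervals
`I(x, y) = {w | d(x, w) + d(w, y) = d(x, y)}` are convex, and hence that `m(x, y, a)` is the gate
of `a` in `I(x, y)`: it lies on a geodesic from `a` to every point of the interval. Applying the
gate property twice, `d(a, m_b) = d(a, m_a) + d(m_a, m_b)` and `d(b, m_a) = d(b, m_b) + d(m_b, m_a)`;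
adding these and using the triangle inequality gives `2 d(m_a, m_b) ≤ 2 d(a, b)`. -/

open SimpleGraph

theorem SimpleGraph.Connected.exists_adj_dist_add_one_eq {V : Type*} {G : SimpleGraph V}
    (hG : G.Connected) {u w : V} (h : 0 < G.dist u w) :
    ∃ u', G.Adj u u' ∧ G.dist u' w + 1 = G.dist u w := by
  obtain ⟨p, hp⟩ := hG.exists_walk_length_eq_dist u w
  cases p with
  | nil => simp at h
  | @cons _ u' _ hadj q =>
    refine ⟨u', hadj, ?_⟩
    have hq : G.dist u' w ≤ q.length := dist_le q
    have htri : G.dist u w ≤ G.dist u u' + G.dist u' w := hG.dist_triangle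
    rw [dist_eq_one_iff_adj.mpr hadj] at htri
    rw [Walk.length_cons] at hp
    omega

theorem SimpleGraph.dist_add_dist_eq_comm {V : Type*} {G : SimpleGraph V} {x y w : V} :
    G.dist x w + G.dist w y = G.dist x y ↔ G.dist y w + G.dist w x = G.dist y x := by
  rw [G.dist_comm (u := x) (v := w), G.dist_comm (u := w) (v := y), G.dist_comm (u := x) (v := y)]
  constructor <;> intro <;> omega

namespace IsMedianFn

variable {V : Type*} {G : SimpleGraph V} {m : V → V → V → V}

theorem dist_eq_add_one_or_of_adj (hm : IsMedianFn G m) {u u' : V} (h : G.Adj u u') (c : V) :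
    G.dist u' c = G.dist u c + 1 ∨ G.dist u c = G.dist u' c + 1 := by
  obtain ⟨⟨h1, h2, h3⟩, -⟩ := hm.2 u u' c
  rw [dist_eq_one_iff_adj.mpr h] at h1
  rcases (by omega : G.dist u (m u u' c) = 0 ∨ G.dist (m u u' c) u' = 0) with h0 | h0
  · rw [← hm.1.dist_eq_zero_iff.mp h0, dist_eq_one_iff_adj.mpr h.symm] at h2
    omega
  · rw [hm.1.dist_eq_zero_iff.mp h0, dist_eq_one_iff_adj.mpr h] at h3
    omega

theorem dist_eq_two_of_adj_of_adj (hm : IsMedianFn G m) {u p q : V} (hp : G.Adj u p)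
    (hq : G.Adj u q) (hpq : p ≠ q) : G.dist p q = 2 := by
  have hpu : G.dist p u = 1 := dist_eq_one_iff_adj.mpr hp.symm
  have huq : G.dist u q = 1 := dist_eq_one_iff_adj.mpr hq
  have htri : G.dist p q ≤ G.dist p u + G.dist u q := hm.1.dist_triangle
  have hne0 : G.dist p q ≠ 0 := fun h ↦ hpq (hm.1.dist_eq_zero_iff.mp h)
  have hne1 : G.dist p q ≠ 1 := fun h ↦ by
    have hqu : G.dist q u = 1 := dist_eq_one_iff_adj.mpr hq.symm
    rcases hm.dist_eq_add_one_or_of_adj (dist_eq_one_iff_adj.mp h) u with h' | h' <;> omega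
  omega

theorem eq_of_three_common_neighbors (hm : IsMedianFn G m) {u v p q r : V} (hpq : p ≠ q)
    (hpr : p ≠ r) (hqr : q ≠ r) (hu : G.Adj u p ∧ G.Adj u q ∧ G.Adj u r)
    (hv : G.Adj v p ∧ G.Adj v q ∧ G.Adj v r) : u = v := by
  have median : ∀ w, G.Adj w p → G.Adj w q → G.Adj w r → w = m p q r := by
    intro w hp hq hr
    refine (hm.2 p q r).2 w ⟨?_, ?_, ?_⟩ <;>
      simp only [dist_eq_one_iff_adj.mpr hp.symm, dist_eq_one_iff_adj.mpr hq.symm,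
        dist_eq_one_iff_adj.mpr hq, dist_eq_one_iff_adj.mpr hr,
        hm.dist_eq_two_of_adj_of_adj hp hq hpq, hm.dist_eq_two_of_adj_of_adj hq hr hqr,
        hm.dist_eq_two_of_adj_of_adj hp hr hpr]
  exact (median u hu.1 hu.2.1 hu.2.2).trans (median v hv.1 hv.2.1 hv.2.2).symm

theorem exists_common_neighbor_closer (hm : IsMedianFn G m) {u v x : V} (huv : G.dist u v = 2)
    (hx : G.dist x u = G.dist x v) :
    ∃ c, G.Adj u c ∧ G.Adj v c ∧ G.dist x c + 1 = G.dist x u := by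
  obtain ⟨⟨h1, h2, h3⟩, -⟩ := hm.2 u v x
  have := G.dist_comm (u := m u v x) (v := v)
  have := G.dist_comm (u := m u v x) (v := x)
  have := G.dist_comm (u := v) (v := x)
  have := G.dist_comm (u := u) (v := x)
  exact ⟨m u v x, dist_eq_one_iff_adj.mp (by omega), dist_eq_one_iff_adj.mp (by omega), by omega⟩

theorem not_adj_of_dist_eq_two_of_farther (hm : IsMedianFn G m) {x y u v u' : V}
    (hu : G.dist x u + G.dist u y = G.dist x y) (huv : G.dist u v = 2)
    (hxv : G.dist x u = G.dist x v) (hyv : G.dist y u = G.dist y v) (hadj : G.Adj u u')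
    (hxu' : G.dist x u' = G.dist x u + 1) (hyu' : G.dist y u' = G.dist y u + 1) :
    ¬ G.Adj v u' := by
  intro hvu'
  obtain ⟨c, hcu, hcv, hcx⟩ := hm.exists_common_neighbor_closer huv hxv
  obtain ⟨c', hc'u, hc'v, hc'y⟩ := hm.exists_common_neighbor_closer huv hyv
  have hcc' : c ≠ c' := by
    rintro rfl
    have : G.dist x y ≤ G.dist x c + G.dist c y := hm.1.dist_triangle
    have := G.dist_comm (u := c) (v := y)
    have := G.dist_comm (u := u) (v := y)
    omega
  have huc : u' ≠ c := by rintro rfl; omega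
  have huc' : u' ≠ c' := by rintro rfl; omega
  have := hm.eq_of_three_common_neighbors huc huc' hcc' ⟨hadj, hcu, hc'u⟩ ⟨hvu', hcv, hc'v⟩
  simp [this] at huv

theorem dist_add_dist_eq_of_minimal (hm : IsMedianFn G m) {x y u u' v : V} (hadj : G.Adj u u')
    (hv : G.dist x v + G.dist v y = G.dist x y) (huv : G.dist u v = G.dist u' v + 1)
    (hmin : ∀ z, G.dist x z + G.dist z y = G.dist x y → G.dist u' z < G.dist u' v →
      G.dist u z ≤ G.dist u' z) :
    G.dist x v + G.dist v u' = G.dist x u' := by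
  obtain ⟨⟨h1, h2, h3⟩, -⟩ := hm.2 x u' v
  -- `z` lies in `I(x, y)`, and on a geodesic from `u'` to `v`, so minimality forces `z = v`.
  set z := m x u' v
  have hz : G.dist x z + G.dist z y = G.dist x y := by
    have : G.dist x y ≤ G.dist x z + G.dist z y := hm.1.dist_triangle
    have : G.dist z y ≤ G.dist z v + G.dist v y := hm.1.dist_triangle
    omega
  rcases hm.dist_eq_add_one_or_of_adj hadj z with hfar | hnear
  · have : G.dist u v ≤ G.dist u z + G.dist z v := hm.1.dist_triangle
    omega
  · by_cases hzv : z = v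
    · rwa [← hzv]
    · have hpos : G.dist z v ≠ 0 := fun h ↦ hzv (hm.1.dist_eq_zero_iff.mp h)
      have := hmin z hz (by omega)
      omega

theorem dist_le_dist_of_adj_of_farther (hm : IsMedianFn G m) {x y u u' v : V}
    (hadj : G.Adj u u') (hu : G.dist x u + G.dist u y = G.dist x y)
    (hxu' : G.dist x u' = G.dist x u + 1) (hyu' : G.dist y u' = G.dist y u + 1)
    (hv : G.dist x v + G.dist v y = G.dist x y) : G.dist u v ≤ G.dist u' v := by
  induction hn : G.dist u' v using Nat.strong_induction_on generalizing v with
  | _ n ih =>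
  by_contra! hlt
  have huv : G.dist u v = G.dist u' v + 1 := by
    rcases hm.dist_eq_add_one_or_of_adj hadj v with h | h <;> omega
  have hmin : ∀ z, G.dist x z + G.dist z y = G.dist x y → G.dist u' z < G.dist u' v →
      G.dist u z ≤ G.dist u' z := fun z hz hz' ↦ ih _ (hn ▸ hz') hz rfl
  have hx := hm.dist_add_dist_eq_of_minimal hadj hv huv hmin
  have hy := hm.dist_add_dist_eq_of_minimal hadj (dist_add_dist_eq_comm.mp hv) huv
    (fun z hz ↦ hmin z (dist_add_dist_eq_comm.mp hz))
  -- Adding `hx` and `hy` and comparing with `hv` gives `2 d(v, u') = 2`.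
  have := G.dist_comm (u := x) (v := y)
  have := G.dist_comm (u := v) (v := y)
  have := G.dist_comm (u := u) (v := y)
  have := G.dist_comm (u := v) (v := u')
  have hvu' : G.dist v u' = 1 := by omega
  exact hm.not_adj_of_dist_eq_two_of_farther hu (by omega) (by omega) (by omega) hadj hxu' hyu'
    (dist_eq_one_iff_adj.mp hvu')

theorem graphConvex_interval (hm : IsMedianFn G m) (x y : V) :
    GraphConvex G {w | G.dist x w + G.dist w y = G.dist x y} := by
  intro u (hu : G.dist x u + G.dist u y = G.dist x y) v (hv : G.dist x v + G.dist v y = G.dist x y)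
    w hw
  show G.dist x w + G.dist w y = G.dist x y
  induction hn : G.dist u w using Nat.strong_induction_on generalizing u with
  | _ n ih =>
  obtain rfl | hpos := Nat.eq_zero_or_pos n
  · rwa [← hm.1.dist_eq_zero_iff.mp hn]
  obtain ⟨u', hadj, hstep⟩ := hm.1.exists_adj_dist_add_one_eq (hn ▸ hpos)
  have huu' : G.dist u u' = 1 := dist_eq_one_iff_adj.mpr hadj
  have : G.dist u v ≤ G.dist u u' + G.dist u' v := hm.1.dist_triangle
  have : G.dist u' v ≤ G.dist u' w + G.dist w v := hm.1.dist_triangle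
  have hu'v : G.dist u' v + 1 = G.dist u v := by omega
  have hu' : G.dist x u' + G.dist u' y = G.dist x y := by
    have : G.dist x y ≤ G.dist x u' + G.dist u' y := hm.1.dist_triangle
    have := G.dist_comm (u := u) (v := y)
    have := G.dist_comm (u := u') (v := y)
    rcases hm.dist_eq_add_one_or_of_adj hadj x with hx | hx <;>
      rcases hm.dist_eq_add_one_or_of_adj hadj y with hy | hy <;>
      rw [G.dist_comm (u := u'), G.dist_comm (u := u)] at hx hy
    · have := hm.dist_le_dist_of_adj_of_farther hadj hu hx hy hv
      omega
    all_goals omega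
  exact ih _ (by omega) u' hu' (by omega) rfl

theorem dist_add_dist_median_eq (hm : IsMedianFn G m) (x y a : V) {u : V}
    (hu : G.dist x u + G.dist u y = G.dist x y) :
    G.dist a (m x y a) + G.dist (m x y a) u = G.dist a u := by
  obtain ⟨⟨p1, p2, p3⟩, hp⟩ := hm.2 x y a
  obtain ⟨⟨w1, w2, w3⟩, -⟩ := hm.2 a (m x y a) u
  set p := m x y a
  set w := m a p u
  -- By convexity `w ∈ I(x, y)`, and `w ∈ I(a, p)`, so `w` is also a median of `x, y, a`.
  have hwI : G.dist x w + G.dist w y = G.dist x y := hm.graphConvex_interval x y p p1 u hu w w2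
  have : G.dist x a ≤ G.dist x w + G.dist w a := hm.1.dist_triangle
  have : G.dist x w ≤ G.dist x p + G.dist p w := hm.1.dist_triangle
  have : G.dist y a ≤ G.dist y w + G.dist w a := hm.1.dist_triangle
  have : G.dist y w ≤ G.dist y p + G.dist p w := hm.1.dist_triangle
  have := G.dist_comm (u := p) (v := a)
  have := G.dist_comm (u := w) (v := p)
  have := G.dist_comm (u := w) (v := a)
  have hwp : w = p := hp w ⟨hwI, by omega, by omega⟩
  rwa [hwp] at w3

end IsMedianFn

/-- The median operation of a median graph is 1-Lipschitz in each variable. -/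
theorem stmt3 {V : Type*} (G : SimpleGraph V) (m : V → V → V → V)
    (hm : IsMedianFn G m) (x y a b : V) :
    G.dist (m x y a) (m x y b) ≤ G.dist a b := by
  have hga := hm.dist_add_dist_median_eq x y a (hm.2 x y b).1.1
  have hgb := hm.dist_add_dist_median_eq x y b (hm.2 x y a).1.1
  have : G.dist a (m x y b) ≤ G.dist a b + G.dist b (m x y b) := hm.1.dist_triangle
  have : G.dist b (m x y a) ≤ G.dist b a + G.dist a (m x y a) := hm.1.dist_triangle
  have := G.dist_comm (u := m x y b) (v := m x y a)
  have := G.dist_comm (u := a) (v := b)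
  omega
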